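/- Let k ≥ 2 and n ≥ 2k+3 be integers. Then the number of cyclic binary strings of length n all of whose blocks have length at least k satisfies the linear recurrence a_k(n) = 2·a_k(n−1) − a_k(n−2) + a_k(n−2k). -/

import Mathlib

open SimpleGraph

/-- `N[S]`: the union of closed neighbourhoods of the vertices of `S`. -/
def closedNbhd {V : Type*} (G : SimpleGraph V) (S : Set V) : Set V :=
  ⋃ v ∈ S, insert v (G.neighborSet v)

/-- A set `S` is digitally convex in `G` if every vertex `v` with `N[v] ⊆ N[S]`
belongs to `S`. -/
def DigConvex {V : Type*} (G : SimpleGraph V) (S : Set V) : Prop :=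
  ∀ v : V, insert v (G.neighborSet v) ⊆ closedNbhd G S → v ∈ S

/-- `n_D(G)`: the number of digitally convex sets of `G`. -/
noncomputable def nD {V : Type*} (G : SimpleGraph V) : ℕ :=
  Nat.card {S : Set V // DigConvex G S}

/-- A cyclic binary string `s : ZMod n → {0,1}` has all (maximal cyclic) blocks of
length at least `k`: whenever `s i ≠ s (i+1)`, the `k` bits starting at `i+1` all
equal `s (i+1)`. -/
def BlocksAtLeast {n : ℕ} (k : ℕ) (s : ZMod n → Fin 2) : Prop :=
  ∀ i : ZMod n, s i ≠ s (i + 1) → ∀ t : ℕ, 1 ≤ t → t ≤ k → s (i + (t : ZMod n)) = s (i + 1)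

/-- `a k n = |B_{k,n}|`: the number of cyclic binary strings of length `n` all of
whose blocks have length at least `k`. -/
noncomputable def numCyclicStrings (k n : ℕ) : ℕ :=
  Nat.card {s : ZMod n → Fin 2 // BlocksAtLeast k s}

/-!
A cyclic string is determined by its first bit and its set `D ⊆ {0, …, n-1}` of change
positions, and the strings with all blocks of length at least `k` correspond to the sets `D`
of even size whose cyclic gaps are all at least `k`. Hence `a_k(n) = 2 E(n)`, where `E(m)` and
`O(m)` count the `k`-separated subsets of the `m`-cycle of even and of odd size.

A `k`-separated set on the `m`-cycle either stays separated on the `(m-1)`-cycle, or its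
largest element is `m - 1` or lies exactly `k` before the wrap-around to its least element.
Deleting that element, and the last `k` positions of the cycle with it, is a bijection from the
second kind onto the `k`-separated sets on the `(m-k)`-cycle. So `E(m) = E(m-1) + O(m-k)` and
`O(m) = O(m-1) + E(m-k)`, and eliminating `O` gives the recurrence.
-/

open Finset

/-- `D ⊆ {0, …, m-1}` read on the cycle `ℤ/m`: consecutive elements are at least `k` apart, and so
are `max D` and `min D + m` across the wrap-around. -/
def CyclicallySeparated (k m : ℕ) (D : Finset ℕ) : Prop :=
  D ⊆ range m ∧ (∀ x ∈ D, ∀ y ∈ D, x < y → x + k ≤ y) ∧ ∀ x ∈ D, ∀ y ∈ D, y + k ≤ x + m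

instance (k m : ℕ) : DecidablePred (CyclicallySeparated k m) := fun _ => by
  unfold CyclicallySeparated; infer_instance

def separatedSets (k m : ℕ) : Finset (Finset ℕ) :=
  {D ∈ (range m).powerset | CyclicallySeparated k m D}

/-- The element `min (m - 1) (m - k + min D)` to put on top of a set separated on the
`(m-k)`-cycle. -/
def apex (k m : ℕ) (D : Finset ℕ) : ℕ :=
  (insert (m - 1) (D.image (m - k + ·))).min' (insert_nonempty _ _)

section Separated

variable {k m : ℕ} {D : Finset ℕ}

lemma mem_separatedSets : D ∈ separatedSets k m ↔ CyclicallySeparated k m D := by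
  simp only [separatedSets, mem_filter, mem_powerset, and_iff_right_iff_imp]
  exact fun h => h.1

lemma cyclicallySeparated_iff (hD : D ⊆ range m) :
    CyclicallySeparated k m D ↔ ∀ a ∈ D, ∀ t, 0 < t → t < k → (a + t) % m ∉ D := by
  have hlt : ∀ x ∈ D, x < m := fun x hx => mem_range.mp (hD hx)
  constructor
  · rintro ⟨-, hpair, hspread⟩ a ha t ht htk hb
    have := hspread a ha a ha
    have := hlt a ha
    rcases lt_or_ge (a + t) m with h | h
    · rw [Nat.mod_eq_of_lt h] at hb
      have := hpair a ha _ hb (by omega)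
      omega
    · rw [Nat.mod_eq_sub_mod h, Nat.mod_eq_of_lt (by omega)] at hb
      have := hspread _ hb a ha
      omega
  · intro h
    refine ⟨hD, fun x hx y hy hxy => ?_, fun x hx y hy => ?_⟩
    · by_contra hyx
      have := h x hx (y - x) (by omega) (by omega)
      rw [Nat.add_sub_cancel' hxy.le, Nat.mod_eq_of_lt (hlt y hy)] at this
      exact this hy
    · by_contra hyx
      have := hlt y hy
      have := h y hy (x + m - y) (by omega) (by omega)
      rw [show y + (x + m - y) = x + m by omega, Nat.add_mod_right,
        Nat.mod_eq_of_lt (hlt x hx)] at this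
      exact this hx

lemma CyclicallySeparated.mono {m' : ℕ} (h : CyclicallySeparated k m D) (hm : m ≤ m') :
    CyclicallySeparated k m' D :=
  ⟨h.1.trans (range_subset_range.mpr hm), h.2.1,
    fun x hx y hy => (h.2.2 x hx y hy).trans (by omega)⟩

lemma apex_le_pred : apex k m D ≤ m - 1 :=
  min'_le _ _ (mem_insert_self _ _)

lemma apex_le {x : ℕ} (hx : x ∈ D) : apex k m D ≤ m - k + x :=
  min'_le _ _ (mem_insert_of_mem (mem_image_of_mem _ hx))

lemma apex_eq_or : apex k m D = m - 1 ∨ ∃ a ∈ D, apex k m D = m - k + a := by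
  obtain h | h := mem_insert.mp (min'_mem (insert (m - 1) (D.image (m - k + ·))) (insert_nonempty _ _))
  · exact Or.inl h
  · obtain ⟨a, ha, h⟩ := mem_image.mp h
    exact Or.inr ⟨a, ha, h.symm⟩

lemma le_apex (hk : 0 < k) : m - k ≤ apex k m D := by
  rcases apex_eq_or (k := k) (m := m) (D := D) with h | ⟨a, -, h⟩ <;> omega

lemma filter_insert_apex (hk : 0 < k) (hD : D ⊆ range (m - k)) :
    {x ∈ insert (apex k m D) D | x < m - k} = D := by
  rw [filter_insert, if_neg (le_apex hk).not_gt,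
    filter_true_of_mem fun x hx => mem_range.mp (hD hx)]

lemma CyclicallySeparated.insert_apex (hk : 0 < k) (hkm : k ≤ m)
    (h : CyclicallySeparated k (m - k) D) :
    CyclicallySeparated k m (insert (apex k m D) D) := by
  obtain ⟨hsub, hpair, hspread⟩ := h
  have hlt : ∀ x ∈ D, x < m - k := fun x hx => mem_range.mp (hsub hx)
  have hp := apex_le_pred (k := k) (m := m) (D := D)
  have hp' := le_apex (m := m) (D := D) hk
  have hgap : ∀ x ∈ D, x + k ≤ apex k m D := by
    intro x hx
    rcases apex_eq_or (k := k) (m := m) (D := D) with h | ⟨a, ha, h⟩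
    · have := hlt x hx; omega
    · have := hspread a ha x hx; omega
  simp only [CyclicallySeparated, insert_subset_iff, forall_mem_insert, mem_range]
  refine ⟨⟨by omega, hsub.trans (range_subset_range.mpr (by omega))⟩,
    ⟨⟨by omega, fun y hy => by have := hlt y hy; omega⟩, fun x hx => ⟨fun _ => hgap x hx, hpair x hx⟩⟩,
    ⟨⟨by omega, fun y hy => by have := hlt y hy; omega⟩,
      fun x hx => ⟨by have := apex_le (k := k) (m := m) hx; omega,
        fun y hy => (hspread x hx y hy).trans (by omega)⟩⟩⟩

lemma not_cyclicallySeparated_insert_apex (hk : 0 < k) (hkm : k ≤ m) :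
    ¬ CyclicallySeparated k (m - 1) (insert (apex k m D) D) := by
  rintro ⟨hsub, -, hspread⟩
  rcases apex_eq_or (k := k) (m := m) (D := D) with h | ⟨a, ha, h⟩
  · have := mem_range.mp (hsub (mem_insert_self _ _)); omega
  · have := hspread a (mem_insert_of_mem ha) _ (mem_insert_self _ _); omega

lemma CyclicallySeparated.erase_max' (h : CyclicallySeparated k m D) (hne : D.Nonempty) :
    CyclicallySeparated k (m - k) (D.erase (D.max' hne)) := by
  obtain ⟨hsub, hpair, hspread⟩ := h
  have hd := mem_range.mp (hsub (max'_mem D hne))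
  have hbelow : ∀ x ∈ D.erase (D.max' hne), x + k ≤ D.max' hne := fun x hx =>
    hpair x (mem_of_mem_erase hx) _ (max'_mem D hne) (lt_of_le_of_ne (le_max' D x
      (mem_of_mem_erase hx)) (ne_of_mem_erase hx))
  refine ⟨fun x hx => mem_range.mpr (by have := hbelow x hx; omega),
    fun x hx y hy => hpair x (mem_of_mem_erase hx) y (mem_of_mem_erase hy), fun x hx y hy => ?_⟩
  have := hspread x (mem_of_mem_erase hx) _ (max'_mem D hne)
  have := hbelow y hy
  omega

lemma CyclicallySeparated.max'_tight (h : CyclicallySeparated k m D)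
    (h' : ¬ CyclicallySeparated k (m - 1) D) (hne : D.Nonempty) :
    D.max' hne = m - 1 ∨ ∃ a ∈ D, D.max' hne + k = a + m := by
  obtain ⟨hsub, hpair, hspread⟩ := h
  by_contra! hloose
  have hd := mem_range.mp (hsub (max'_mem D hne))
  refine h' ⟨fun x hx => mem_range.mpr ?_, hpair, fun x hx y hy => ?_⟩
  · have := le_max' D x hx; omega
  · have := le_max' D y hy
    have := hspread x hx _ (max'_mem D hne)
    have := hloose.2 x hx
    omega

lemma apex_erase_max' (hkm : k < m) (h : CyclicallySeparated k m D)
    (h' : ¬ CyclicallySeparated k (m - 1) D) (hne : D.Nonempty) :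
    apex k m (D.erase (D.max' hne)) = D.max' hne := by
  have hd := mem_range.mp (h.1 (max'_mem D hne))
  refine le_antisymm ?_ ?_
  · rcases h.max'_tight h' hne with hmax | ⟨a, ha, hmax⟩
    · exact hmax ▸ apex_le_pred
    · have had : a ≠ D.max' hne := by rintro rfl; omega
      have := apex_le (k := k) (m := m) (mem_erase.mpr ⟨had, ha⟩)
      omega
  · rcases apex_eq_or (k := k) (m := m) (D := D.erase (D.max' hne)) with hp | ⟨a, ha, hp⟩
    · omega
    · have := h.2.2 a (mem_of_mem_erase ha) _ (max'_mem D hne)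
      omega

theorem separatedSets_eq_union (hk : 0 < k) (hkm : k < m) :
    separatedSets k m = separatedSets k (m - 1) ∪
      (separatedSets k (m - k)).image fun D => insert (apex k m D) D := by
  ext D
  simp only [mem_union, mem_image, mem_separatedSets]
  constructor
  · intro h
    by_cases h' : CyclicallySeparated k (m - 1) D
    · exact Or.inl h'
    · have hne : D.Nonempty := nonempty_iff_ne_empty.mpr fun hD => h' (by
        simp [hD, CyclicallySeparated])
      refine Or.inr ⟨D.erase (D.max' hne), h.erase_max' hne, ?_⟩
      rw [apex_erase_max' hkm h h' hne, insert_erase (max'_mem D hne)]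
  · rintro (h | ⟨D', h', rfl⟩)
    · exact h.mono (Nat.sub_le m 1)
    · exact h'.insert_apex hk hkm.le

theorem sum_separatedSets {M : Type*} [AddCommMonoid M] (w : ℕ → M) (hk : 0 < k) (hkm : k < m) :
    ∑ D ∈ separatedSets k m, w #D =
      ∑ D ∈ separatedSets k (m - 1), w #D + ∑ D ∈ separatedSets k (m - k), w (#D + 1) := by
  have hsub : ∀ D ∈ separatedSets k (m - k), D ⊆ range (m - k) := fun D hD =>
    (mem_separatedSets.mp hD).1
  have hinj : Set.InjOn (fun D => insert (apex k m D) D) (separatedSets k (m - k)) :=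
    fun D₁ h₁ D₂ h₂ heq => by
      rw [← filter_insert_apex hk (hsub D₁ h₁), ← filter_insert_apex hk (hsub D₂ h₂)]
      exact congrArg _ heq
  have hdisj : Disjoint (separatedSets k (m - 1))
      ((separatedSets k (m - k)).image fun D => insert (apex k m D) D) := by
    refine disjoint_left.mpr fun D hD hD' => ?_
    obtain ⟨D', -, rfl⟩ := mem_image.mp hD'
    exact not_cyclicallySeparated_insert_apex hk hkm.le (mem_separatedSets.mp hD)
  rw [separatedSets_eq_union hk hkm, sum_union hdisj, sum_image hinj]
  refine congrArg _ (sum_congr rfl fun D hD => ?_)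
  have hnot : apex k m D ∉ D := fun hp => (le_apex hk).not_gt (mem_range.mp (hsub D hD hp))
  rw [card_insert_of_notMem hnot]

end Separated

theorem card_filter_separatedSets {k m : ℕ} (P : ℕ → Prop) [DecidablePred P] (hk : 0 < k)
    (hkm : k < m) :
    #{D ∈ separatedSets k m | P #D} =
      #{D ∈ separatedSets k (m - 1) | P #D} + #{D ∈ separatedSets k (m - k) | P (#D + 1)} := by
  simp only [card_filter]
  exact sum_separatedSets (fun c => if P c then 1 else 0) hk hkm

section Strings

-- for the cast `ℕ → Fin 2`, through which the parity of the number of changes enters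
open Fin.CommRing

def changes {n : ℕ} (s : ZMod n → Fin 2) : Finset ℕ :=
  {i ∈ range n | s i ≠ s (i + 1)}

def flips (D : Finset ℕ) (j : ℕ) : Fin 2 :=
  ∑ i ∈ range j, if i ∈ D then 1 else 0

def ofChanges {n : ℕ} (b : Fin 2) (D : Finset ℕ) : ZMod n → Fin 2 :=
  fun x => b + flips D x.val

variable {n k : ℕ} {D : Finset ℕ}

lemma flips_succ (D : Finset ℕ) (j : ℕ) : flips D (j + 1) = flips D j + if j ∈ D then 1 else 0 :=
  sum_range_succ _ _

lemma flips_of_subset_range (hD : D ⊆ range n) : flips D n = #D := by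
  rw [flips, sum_boole, filter_mem_eq_inter, inter_eq_right.mpr hD]

lemma blocksAtLeast_iff_forall_no_change (s : ZMod n → Fin 2) :
    BlocksAtLeast k s ↔
      ∀ i, s i ≠ s (i + 1) → ∀ t : ℕ, 0 < t → t < k → s (i + t) = s (i + t + 1) := by
  constructor
  · intro h i hi t ht htk
    rw [h i hi t ht htk.le, add_assoc, ← Nat.cast_succ, h i hi (t + 1) (by omega) htk]
  · intro h i hi t ht htk
    induction t with
    | zero => omega
    | succ t ih =>
      rcases Nat.eq_zero_or_pos t with rfl | ht'
      · simp
      · rw [Nat.cast_succ, ← add_assoc, ← h i hi t ht' (by omega), ih ht' (by omega)]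

lemma natCast_fin_two_eq_zero_iff_even {c : ℕ} : (c : Fin 2) = 0 ↔ Even c :=
  ZMod.natCast_eq_zero_iff_even

lemma changes_subset_range (s : ZMod n → Fin 2) : changes s ⊆ range n :=
  filter_subset _ _

lemma ofChanges_zero (b : Fin 2) (D : Finset ℕ) : ofChanges b D (0 : ZMod n) = b := by
  simp [ofChanges, flips]

variable [NeZero n]

lemma mod_mem_changes (s : ZMod n → Fin 2) (j : ℕ) : j % n ∈ changes s ↔ s j ≠ s (j + 1) := by
  simp [changes, Nat.mod_lt _ (NeZero.pos n)]

lemma mem_changes_of_lt (s : ZMod n → Fin 2) {j : ℕ} (hj : j < n) :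
    j ∈ changes s ↔ s j ≠ s (j + 1) := by
  simpa only [Nat.mod_eq_of_lt hj] using mod_mem_changes s j

lemma apply_natCast_eq_add_flips (s : ZMod n → Fin 2) {j : ℕ} (hj : j ≤ n) :
    s j = s 0 + flips (changes s) j := by
  induction j with
  | zero => simp [flips]
  | succ j ih =>
    have step : ∀ x y : Fin 2, y = x + if x ≠ y then 1 else 0 := by decide
    rw [flips_succ, ← add_assoc, ← ih (by omega), Nat.cast_succ]
    simp only [mem_changes_of_lt s (by omega : j < n)]
    exact step _ _

lemma even_card_changes (s : ZMod n → Fin 2) : Even #(changes s) := by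
  have h := apply_natCast_eq_add_flips s le_rfl
  rw [ZMod.natCast_self, flips_of_subset_range (changes_subset_range s), left_eq_add] at h
  exact natCast_fin_two_eq_zero_iff_even.mp h

lemma ofChanges_natCast (b : Fin 2) (hD : D ⊆ range n) (heven : Even #D) {j : ℕ} (hj : j ≤ n) :
    ofChanges b D (j : ZMod n) = b + flips D j := by
  rcases hj.lt_or_eq with hj | rfl
  · rw [ofChanges, ZMod.val_natCast_of_lt hj]
  · rw [ofChanges, ZMod.natCast_self, ZMod.val_zero, flips_of_subset_range hD,
      natCast_fin_two_eq_zero_iff_even.mpr heven]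
    simp [flips]

lemma changes_ofChanges (b : Fin 2) (hD : D ⊆ range n) (heven : Even #D) :
    changes (ofChanges b D : ZMod n → Fin 2) = D := by
  ext j
  rcases lt_or_ge j n with hj | hj
  · rw [mem_changes_of_lt _ hj, ← Nat.cast_succ, ofChanges_natCast b hD heven hj.le,
      ofChanges_natCast b hD heven hj, flips_succ]
    by_cases h : j ∈ D <;> simp [h]
  · exact iff_of_false (fun h => hj.not_gt (mem_range.mp (changes_subset_range _ h)))
      (fun h => hj.not_gt (mem_range.mp (hD h)))

lemma ofChanges_changes (s : ZMod n → Fin 2) : ofChanges (s 0) (changes s) = s :=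
  funext fun x => by
    rw [ofChanges, ← apply_natCast_eq_add_flips s (ZMod.val_lt x).le, ZMod.natCast_zmod_val]

lemma forall_no_change_iff_changes (s : ZMod n → Fin 2) :
    (∀ i, s i ≠ s (i + 1) → ∀ t : ℕ, 0 < t → t < k → s (i + t) = s (i + t + 1)) ↔
      ∀ a ∈ changes s, ∀ t, 0 < t → t < k → (a + t) % n ∉ changes s := by
  simp only [mod_mem_changes, Nat.cast_add, not_not]
  constructor
  · intro h a ha
    exact h a ((mem_changes_of_lt s (mem_range.mp (changes_subset_range s ha))).mp ha)
  · intro h i hi t ht htk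
    have hval := (mem_changes_of_lt s (ZMod.val_lt i)).mpr (by rwa [ZMod.natCast_zmod_val])
    simpa only [ZMod.natCast_zmod_val] using h i.val hval t ht htk

lemma blocksAtLeast_iff_cyclicallySeparated (s : ZMod n → Fin 2) :
    BlocksAtLeast k s ↔ CyclicallySeparated k n (changes s) := by
  rw [blocksAtLeast_iff_forall_no_change, forall_no_change_iff_changes,
    cyclicallySeparated_iff (changes_subset_range s)]

theorem numCyclicStrings_eq (k : ℕ) :
    numCyclicStrings k n = 2 * #{D ∈ separatedSets k n | Even #D} := by
  have hmem : ∀ {D}, D ∈ {D ∈ separatedSets k n | Even #D} →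
      CyclicallySeparated k n D ∧ Even #D := fun hD => by
    rwa [mem_filter, mem_separatedSets] at hD
  let e : {s : ZMod n → Fin 2 // BlocksAtLeast k s} ≃
      Fin 2 × {D // D ∈ {D ∈ separatedSets k n | Even #D}} :=
    { toFun s := (s.1 0, ⟨changes s.1, mem_filter.mpr ⟨mem_separatedSets.mpr
        ((blocksAtLeast_iff_cyclicallySeparated s.1).mp s.2), even_card_changes s.1⟩⟩)
      invFun p := ⟨ofChanges p.1 p.2.1, by
        rw [blocksAtLeast_iff_cyclicallySeparated,
          changes_ofChanges _ (hmem p.2.2).1.1 (hmem p.2.2).2]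
        exact (hmem p.2.2).1⟩
      left_inv s := Subtype.ext (ofChanges_changes s.1)
      right_inv p := Prod.ext (ofChanges_zero _ _)
        (Subtype.ext (changes_ofChanges _ (hmem p.2.2).1.1 (hmem p.2.2).2)) }
  rw [numCyclicStrings, Nat.card_congr e, Nat.card_prod, Nat.card_eq_finsetCard, Nat.card_fin]

end Strings

theorem cyclic_strings_recurrence (k n : ℕ) (hk : 2 ≤ k) (hn : 2 * k + 3 ≤ n) :
    (numCyclicStrings k n : ℤ) =
      2 * numCyclicStrings k (n - 1) - numCyclicStrings k (n - 2)
        + numCyclicStrings k (n - 2 * k) := by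
  have hEven := fun m (hkm : k < m) => card_filter_separatedSets Even (by omega) hkm
  have hOdd := fun m (hkm : k < m) => card_filter_separatedSets (¬Even ·) (by omega) hkm
  simp only [Nat.even_add_one, not_not] at hEven hOdd
  have h₀ := hEven n (by omega)
  have h₁ := hEven (n - 1) (by omega)
  have h₂ := hOdd (n - k) (by omega)
  rw [show n - 1 - 1 = n - 2 by omega, show n - 1 - k = n - k - 1 by omega] at h₁
  rw [show n - k - k = n - 2 * k by omega] at h₂
  have hcount : ∀ m, m ≠ 0 → numCyclicStrings k m = 2 * #{D ∈ separatedSets k m | Even #D} :=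
    fun m hm => haveI := NeZero.mk hm; numCyclicStrings_eq k
  rw [hcount n (by omega), hcount (n - 1) (by omega), hcount (n - 2) (by omega),
    hcount (n - 2 * k) (by omega)]
  push_cast
  omega
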